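/- arXiv:math/0209288 — 5 statements merged into one kernel-verified Lean document; each statement's English description precedes it below -/
import Mathlib

section
/- Fix an integer k and natural numbers i ≥ 0 and j ≥ 1, and consider the polynomial Q = (x²+y²)^i·((xy)^(j−1) + (−xy)^(j−1)) + ((1+k²)x²−2kxy+y²)^i·((x(kx−y))^(j−1) + (−x(kx−y))^(j−1)) in ℝ[x,y]. Then Q = 0 if j is even, and Q ≠ 0 if j is odd. (Q is the fiber integral π_*(p₁^i eu^j) for the ruled surface M^k_λ; its nonvanishing for odd j shows H^{4i}(B_{Diff(M)}) ≠ 0 for all i ≥ 1.) -/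
open MvPolynomial

noncomputable section

/-- The polynomial ring ℝ[x,y]. -/
abbrev P2 : Type := MvPolynomial (Fin 2) ℝ

/-- The fraction field ℝ(x,y). -/
abbrev K2 : Type := FractionRing P2

/-- x as a polynomial. -/
def px : P2 := X 0

/-- y as a polynomial. -/
def py : P2 := X 1

/-- x in the fraction field. -/
def fx : K2 := algebraMap P2 K2 px

/-- y in the fraction field. -/
def fy : K2 := algebraMap P2 K2 py

/-- the fiber integral π_*(p₁^i eu^j) of the ruled surface M^k_λ
vanishes for even j and is nonzero for odd j. -/
theorem stmt_1 (k : ℤ) (i j : ℕ) (hj : 1 ≤ j) :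
    ((fun Q : P2 => (Even j → Q = 0) ∧ (Odd j → Q ≠ 0))
      ((px ^ 2 + py ^ 2) ^ i * ((px * py) ^ (j - 1) + (-(px * py)) ^ (j - 1))
        + ((1 + (k : P2) ^ 2) * px ^ 2 - 2 * (k : P2) * px * py + py ^ 2) ^ i
            * ((px * ((k : P2) * px - py)) ^ (j - 1)
              + (-(px * ((k : P2) * px - py))) ^ (j - 1)))) := by
  dsimp only
  constructor
  · intro he
    have hm : Odd (j - 1) := by
      obtain ⟨n, rfl⟩ := he
      exact ⟨n - 1, by omega⟩
    rw [hm.neg_pow, hm.neg_pow]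
    ring
  · intro ho
    have hm : Even (j - 1) := by
      obtain ⟨n, rfl⟩ := ho
      simpa using even_iff.mpr (by omega : (2 * n + 1 - 1) % 2 = 0)
    rw [hm.neg_pow, hm.neg_pow]
    intro h
    have h2 := congrArg (MvPolynomial.eval (fun _ => (1 : ℝ))) h
    simp [px, py] at h2
    have hk : ((k : ℝ) - 1) ^ (j - 1) ≥ 0 := hm.pow_nonneg _
    have h3 : (1 + (k : ℝ) ^ 2 - 2 * k + 1) = (k - 1) ^ 2 + 1 := by ring
    have h4 : (0:ℝ) ≤ (1 + (k:ℝ) ^ 2 - 2 * k + 1) ^ i * ((k : ℝ) - 1) ^ (j - 1) :=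
      mul_nonneg (pow_nonneg (by nlinarith [sq_nonneg ((k:ℝ) - 1)]) i) hk
    nlinarith [pow_pos (show (0:ℝ) < 1 + 1 by norm_num) i]
end
end

section
/- For every integer k and every natural number i, the polynomial (x²+y²)^i + (x²+2xy+2y²)^i + (2x²+2xy+y²)^i + 2·((4k²+4k+2)x² − 2(2k+1)xy + y²)^i is nonzero in ℝ[x,y]. (This polynomial is the fiber integral π_*(p₁^i eu) for the toric manifold CP²#2(CP²-bar); its nonvanishing shows that H^{4i}(B_{Diff(CP²#2(CP²-bar))}) is nontrivial for all i ≥ 1.) -/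
open MvPolynomial

noncomputable section

/-- the fiber integral π_*(p₁^i eu) for CP²#2(CP²-bar) is a
nonzero polynomial for every k and i. -/
theorem stmt_10 (k : ℤ) (i : ℕ) :
    (px ^ 2 + py ^ 2) ^ i
      + (px ^ 2 + 2 * px * py + 2 * py ^ 2) ^ i
      + (2 * px ^ 2 + 2 * px * py + py ^ 2) ^ i
      + 2 * ((4 * (k : P2) ^ 2 + 4 * (k : P2) + 2) * px ^ 2
          - 2 * (2 * (k : P2) + 1) * px * py + py ^ 2) ^ i ≠ 0 := by
  intro h
  have h2 := congrArg (eval fun j : Fin 2 => if j = 0 then (0:ℝ) else 1) h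
  simp [px, py] at h2
  nlinarith [pow_pos (by norm_num : (0:ℝ) < 2) i, pow_pos (by norm_num : (0:ℝ) < 1) i]
end
end

section
/- For every integer k the following identity holds in the fraction field ℝ(x,y) of ℝ[x,y]: (x+y)³/(xy) + x³/(−y(x+y)) + (−y)³/(−x(x+y)) + (2kx−y)³/(−x((2k+1)x−y)) + (−(2k+2)x+y)³/(x((2k+1)x−y)) = −(8k²+8k+4)x + (8k+6)y. In particular the fiber integral π_*(c₁³) for the toric manifold CP²#2(CP²-bar) is a nonzero linear form for every integer k, so H²(B_{Ham}) of this manifold is nontrivial. -/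
open MvPolynomial

noncomputable section

lemma field_id {F : Type*} [Field F] (a b c : F) (ha : a ≠ 0) (hb : b ≠ 0)
    (hab : a + b ≠ 0) (hd : (2 * c + 1) * a - b ≠ 0) :
    (a + b) ^ 3 / (a * b)
      + a ^ 3 / (-(b * (a + b)))
      + (-b) ^ 3 / (-(a * (a + b)))
      + (2 * c * a - b) ^ 3 / (-(a * ((2 * c + 1) * a - b)))
      + (-(2 * c + 2) * a + b) ^ 3 / (a * ((2 * c + 1) * a - b))
      = -(8 * c ^ 2 + 8 * c + 4) * a + (8 * c + 6) * b := by
  have h1 : a * b ≠ 0 := mul_ne_zero ha hb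
  have h2 : b * (a + b) ≠ 0 := mul_ne_zero hb hab
  have h3 : a * (a + b) ≠ 0 := mul_ne_zero ha hab
  have h4 : a * ((2 * c + 1) * a - b) ≠ 0 := mul_ne_zero ha hd
  simp only [div_neg, ← neg_div]
  rw [div_add_div _ _ h1 h2, div_add_div _ _ (mul_ne_zero h1 h2) h3,
    div_add_div _ _ (mul_ne_zero (mul_ne_zero h1 h2) h3) h4,
    div_add_div _ _ (mul_ne_zero (mul_ne_zero (mul_ne_zero h1 h2) h3) h4) h4,
    div_eq_iff (mul_ne_zero (mul_ne_zero (mul_ne_zero (mul_ne_zero h1 h2) h3) h4) h4)]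
  ring

lemma pne_of_eval {p : P2} (v : Fin 2 → ℝ) (h : eval v p ≠ 0) : p ≠ 0 := by
  intro hp; apply h; rw [hp, map_zero]

lemma fne_of_ne {p : P2} (h : p ≠ 0) : algebraMap P2 K2 p ≠ 0 := by
  rw [Ne, map_eq_zero_iff _ (IsFractionRing.injective P2 K2)]
  exact h

set_option maxHeartbeats 1600000 in
/-- π_*(c₁³) = −(8k²+8k+4)x + (8k+6)y for CP²#2(CP²-bar), and this
linear form is nonzero for every integer k. -/
theorem stmt_12 (k : ℤ) :
    ((fx + fy) ^ 3 / (fx * fy)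
      + fx ^ 3 / (-(fy * (fx + fy)))
      + (-fy) ^ 3 / (-(fx * (fx + fy)))
      + (2 * (k : K2) * fx - fy) ^ 3 / (-(fx * ((2 * (k : K2) + 1) * fx - fy)))
      + (-(2 * (k : K2) + 2) * fx + fy) ^ 3
          / (fx * ((2 * (k : K2) + 1) * fx - fy))
      = -(8 * (k : K2) ^ 2 + 8 * (k : K2) + 4) * fx + (8 * (k : K2) + 6) * fy)
    ∧ (-(8 * (k : P2) ^ 2 + 8 * (k : P2) + 4) * px + (8 * (k : P2) + 6) * py
        ≠ 0) := by
  have hx : fx ≠ 0 := fne_of_ne (pne_of_eval (fun _ => 1) (by simp [px]))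
  have hy : fy ≠ 0 := fne_of_ne (pne_of_eval (fun _ => 1) (by simp [py]))
  have hxy : fx + fy ≠ 0 := by
    rw [fx, fy, ← map_add]
    exact fne_of_ne (pne_of_eval (fun _ => 1) (by norm_num [px, py]))
  have hd : (2 * (k : K2) + 1) * fx - fy ≠ 0 := by
    have h : (2 * (k : K2) + 1) * fx - fy
        = algebraMap P2 K2 ((2 * (k : P2) + 1) * px - py) := by
      rw [fx, fy, map_sub, map_mul, map_add, map_mul, map_one, map_intCast,
        map_ofNat]
    rw [h]
    exact fne_of_ne (pne_of_eval (fun i => if i = 0 then 0 else 1)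
      (by norm_num [px, py]))
  refine ⟨field_id fx fy (k : K2) hx hy hxy hd, ?_⟩
  apply pne_of_eval (fun i => if i = 0 then 0 else 1)
  simp only [px, py, map_add, map_mul, map_neg, eval_X, map_intCast, map_ofNat,
    map_pow]
  norm_num
  intro h
  have h2 : (8 * k + 6 : ℤ) = 0 := by exact_mod_cast h
  omega
end
end

section
/- For every integer k and every natural number i ≥ 1, the polynomial (xy)^(i−1) + (−y(x+y))^(i−1) + (−x(x+y))^(i−1) + (−x((2k+1)x−y))^(i−1) + (x((2k+1)x−y))^(i−1) is nonzero in ℝ[x,y]. (This polynomial is the fiber integral π_*(eu^i) for the toric manifold CP²#2(CP²-bar); for i = 1 it equals 5, the Euler characteristic, and for i = 2 it equals −(x²+xy+y²).) -/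
open MvPolynomial

noncomputable section

/-- the fiber integral π_*(eu^i) for CP²#2(CP²-bar) is a nonzero
polynomial for every i ≥ 1. -/
theorem stmt_14 (k : ℤ) (i : ℕ) (hi : 1 ≤ i) :
    (px * py) ^ (i - 1)
      + (-(py * (px + py))) ^ (i - 1)
      + (-(px * (px + py))) ^ (i - 1)
      + (-(px * ((2 * (k : P2) + 1) * px - py))) ^ (i - 1)
      + (px * ((2 * (k : P2) + 1) * px - py)) ^ (i - 1) ≠ 0 := by
  intro h
  have h2 := congrArg (eval (fun n : Fin 2 => if n = 0 then (0:ℝ) else 1)) h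
  simp [px, py] at h2
  rcases Nat.eq_zero_or_pos (i - 1) with hj | hj
  · rw [hj] at h2; norm_num at h2
  · rw [zero_pow hj.ne'] at h2
    rcases Nat.even_or_odd (i-1) with he | ho
    · rw [he.neg_one_pow] at h2; norm_num at h2
    · rw [ho.neg_one_pow] at h2; norm_num at h2
end
end

section
/- For every integer k and every natural number i, the element (x+y)^i/(xy) + x^i/(−y(x+y)) + (−y)^i/(−x(x+y)) + (2kx−y)^i/(−x((2k+1)x−y)) + (−(2k+2)x+y)^i/(x((2k+1)x−y)) of the fraction field ℝ(x,y) lies in (the canonical image of) the polynomial ring ℝ[x,y]. (This expresses that the fiber integral π_*(c₁^i) of the toric manifold CP²#2(CP²-bar), computed by the localization formula, is an honest, non-localized, cohomology class of BT²; for i = 0 and i = 1 the sum is 0, for i = 2 it is 7, and for i = 3 it is −(8k²+8k+4)x + (8k+6)y.) -/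
/-
Write `A = x`, `B = y`, `C = (2k+1)x - y`, `U = 2kx - y`, `V = -(2k+2)x + y`, so that `U - V = 2C`.
The first two terms combine to `G / (A(A+B))` with `G = ((A+B)^(i+1) - A^(i+1)) / B`, and the last
two to `-2S / A` with `S = (U^i - V^i) / (U - V)`; both `G` and `S` are polynomials. The whole sum is
therefore `N / (x(x+y))` with `N = G - (-y)^i - 2(x+y)S`, and `N` vanishes on the lines `x = 0` and
`x + y = 0`, so it is divisible by `x(x+y)`.
-/

open MvPolynomial

noncomputable section

namespace MvPolynomial

variable {σ R : Type*} [CommRing R] {d e p : MvPolynomial σ R} {a b : σ → MvPolynomial σ R}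

theorem dvd_sub_aeval (ha : ∀ j, d ∣ X j - a j) (p : MvPolynomial σ R) : d ∣ p - aeval a p := by
  induction p using MvPolynomial.induction_on with
  | C r => simp
  | add p q hp hq => simpa [sub_add_sub_comm] using dvd_add hp hq
  | mul_X p j hp =>
    have : p * X j - aeval a (p * X j) = (p - aeval a p) * X j + aeval a p * (X j - a j) := by
      simp only [map_mul, aeval_X]; ring
    rw [this]
    exact dvd_add (hp.mul_right _) ((ha j).mul_left _)

theorem dvd_of_aeval_eq_zero (ha : ∀ j, d ∣ X j - a j) (hp : aeval a p = 0) : d ∣ p := by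
  have := dvd_sub_aeval ha p
  rwa [hp, sub_zero] at this

theorem mul_dvd_of_aeval_eq_zero [IsDomain R] (ha : ∀ j, d ∣ X j - a j) (hb : ∀ j, e ∣ X j - b j)
    (hd : aeval b d ≠ 0) (hpa : aeval a p = 0) (hpb : aeval b p = 0) : d * e ∣ p := by
  obtain ⟨q, rfl⟩ := dvd_of_aeval_eq_zero ha hpa
  rw [map_mul, mul_eq_zero, or_iff_right hd] at hpb
  exact mul_dvd_mul_left d (dvd_of_aeval_eq_zero hb hpb)

theorem algebraMap_ne_zero_of_eval_ne_zero {K : Type*} [Field K] [Algebra (MvPolynomial σ R) K]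
    [IsFractionRing (MvPolynomial σ R) K] {q : MvPolynomial σ R} (x : σ → R) (hq : eval x q ≠ 0) :
    algebraMap (MvPolynomial σ R) K q ≠ 0 :=
  (map_ne_zero_iff _ (IsFractionRing.injective _ K)).mpr fun h => hq (by rw [h, map_zero])

end MvPolynomial

section Numerator

variable {R S : Type*} [CommRing R] [CommRing S] [IsDomain S] (f : R →+* S) {i : ℕ}
  {x y u v g s : R}

theorem map_numerator_eq_zero_of_map_eq_zero (hg : y * g = (x + y) ^ (i + 1) - x ^ (i + 1))
    (hs : u ^ i - v ^ i = (u - v) * s) (hx : f x = 0) (hu : f u = -f y) (hv : f v = f y)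
    (hy : f y ≠ 0) : f (g - (-y) ^ i - 2 * (x + y) * s) = 0 := by
  apply_fun f at hg hs
  simp only [map_mul, map_sub, map_add, map_pow, map_neg, map_ofNat, hx, hu, hv] at hg hs ⊢
  refine mul_left_cancel₀ hy ?_
  linear_combination hg - f y * hs

theorem map_numerator_eq_zero_of_map_add_eq_zero (hg : y * g = (x + y) ^ (i + 1) - x ^ (i + 1))
    (hxy : f x + f y = 0) (hx : f x ≠ 0) : f (g - (-y) ^ i - 2 * (x + y) * s) = 0 := by
  apply_fun f at hg
  have hy : f y = -f x := eq_neg_of_add_eq_zero_right hxy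
  simp only [map_mul, map_sub, map_add, map_pow, map_neg, map_ofNat, hy] at hg ⊢
  refine mul_left_cancel₀ (neg_ne_zero.mpr hx) ?_
  linear_combination hg

end Numerator

theorem localization_sum_eq {F : Type*} [Field F] {A B C U V G S : F} (i : ℕ) (hA : A ≠ 0)
    (hB : B ≠ 0) (hAB : A + B ≠ 0) (hC : C ≠ 0) (hUV : U - V = 2 * C)
    (hG : B * G = (A + B) ^ (i + 1) - A ^ (i + 1)) (hS : U ^ i - V ^ i = (U - V) * S) :
    (A + B) ^ i / (A * B) + A ^ i / (-(B * (A + B))) + (-B) ^ i / (-(A * (A + B)))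
      + U ^ i / (-(A * C)) + V ^ i / (A * C)
      = (G - (-B) ^ i - 2 * (A + B) * S) / (A * (A + B)) := by
  rw [hUV] at hS
  field_simp
  linear_combination (-C) * hG - B * (A + B) * hS

theorem px_mul_px_add_py_dvd (k : ℤ) {i : ℕ} {g s : P2}
    (hg : (px + py) ^ (i + 1) - px ^ (i + 1) = py * g)
    (hs : (2 * k * px - py) ^ i - (-(2 * k + 2) * px + py) ^ i
      = (2 * k * px - py - (-(2 * k + 2) * px + py)) * s) :
    px * (px + py) ∣ g - (-py) ^ i - 2 * (px + py) * s := by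
  refine mul_dvd_of_aeval_eq_zero (a := ![0, X 1]) (b := ![X 0, -X 0]) ?_ ?_ ?_
    (map_numerator_eq_zero_of_map_eq_zero (aeval _).toRingHom hg.symm hs ?_ ?_ ?_ ?_)
    (map_numerator_eq_zero_of_map_add_eq_zero (aeval _).toRingHom hg.symm ?_ ?_)
  all_goals simp [Fin.forall_fin_two, px, py, add_comm]

/-- the localization expression for π_*(c₁^i) of CP²#2(CP²-bar)
lies in the canonical image of ℝ[x,y] in ℝ(x,y). -/
theorem stmt_16 (k : ℤ) (i : ℕ) :
    ∃ p : P2, algebraMap P2 K2 p =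
      (fx + fy) ^ i / (fx * fy)
        + fx ^ i / (-(fy * (fx + fy)))
        + (-fy) ^ i / (-(fx * (fx + fy)))
        + (2 * (k : K2) * fx - fy) ^ i
            / (-(fx * ((2 * (k : K2) + 1) * fx - fy)))
        + (-(2 * (k : K2) + 2) * fx + fy) ^ i
            / (fx * ((2 * (k : K2) + 1) * fx - fy)) := by
  obtain ⟨g, hg⟩ : py ∣ (px + py) ^ (i + 1) - px ^ (i + 1) := by
    simpa using sub_dvd_pow_sub_pow (px + py) px (i + 1)
  obtain ⟨s, hs⟩ := sub_dvd_pow_sub_pow (2 * (k : P2) * px - py) (-(2 * k + 2) * px + py) i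
  obtain ⟨p, hp⟩ := px_mul_px_add_py_dvd k hg hs
  refine ⟨p, ?_⟩
  have hφx : algebraMap P2 K2 px = fx := rfl
  have hφy : algebraMap P2 K2 py = fy := rfl
  have hx : fx ≠ 0 := algebraMap_ne_zero_of_eval_ne_zero ![1, 0] (by simp [px])
  have hy : fy ≠ 0 := algebraMap_ne_zero_of_eval_ne_zero ![0, 1] (by simp [py])
  have hxy : fx + fy ≠ 0 := by
    have := algebraMap_ne_zero_of_eval_ne_zero (K := K2) (q := px + py) ![0, 1] (by simp [px, py])
    rwa [map_add, hφx, hφy] at this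
  have hc : (2 * (k : K2) + 1) * fx - fy ≠ 0 := by
    have := algebraMap_ne_zero_of_eval_ne_zero (K := K2) (q := (2 * (k : P2) + 1) * px - py)
      ![0, 1] (by simp [px, py])
    simp only [map_sub, map_mul, map_add, map_ofNat, map_intCast, map_one, hφx, hφy] at this
    exact this
  apply_fun algebraMap P2 K2 at hg hs hp
  simp only [map_mul, map_sub, map_add, map_pow, map_neg, map_ofNat, map_intCast, hφx, hφy]
    at hg hs hp
  rw [localization_sum_eq i hx hy hxy hc (by ring) hg.symm hs, hp,
    mul_div_cancel_left₀ _ (mul_ne_zero hx hxy)]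
end
end
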